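/- Let μ be a Borel probability measure on a compact metric space with a Rokhlin disintegration {μ_x} over a measurable partition, and suppose x ↦ μ_x is weak*-continuous on a compact set K of quotient points. For δ > 0 let Γ_δ(x) be the (finite) set of atoms of μ_x with mass ≥ δ. Then the set Γ(K, δ) = {(x, a) : x ∈ K, a ∈ Γ_δ(x)} is closed. -/

import Mathlib

/-!
Weak* convergence makes the mass of closed sets upper semicontinuous (portmanteau). If
`(xₙ, aₙ) → (x, a)` with `μ_{xₙ}{aₙ} ≥ δ`, then for each `ε > 0` eventually `aₙ ∈ closedBall a ε`,
so `μ_x (closedBall a ε) ≥ limsup μ_{xₙ} (closedBall a ε) ≥ δ`; letting `ε → 0` gives `μ_x {a} ≥ δ`.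
-/

open MeasureTheory Filter Topology Metric
open scoped ENNReal

section AtomsOfWeakLimits

variable {X : Type*} [MetricSpace X] [MeasurableSpace X] [OpensMeasurableSpace X]

theorem le_measure_singleton_of_forall_le_measure_closedBall {ν : Measure X} [IsFiniteMeasure ν]
    {a : X} {c : ℝ≥0∞} (h : ∀ ε > 0, c ≤ ν (closedBall a ε)) : c ≤ ν {a} := by
  have hlim : Tendsto (fun r => ν (cthickening r {a})) (𝓝[>] 0) (𝓝 (ν {a})) :=
    (tendsto_measure_cthickening_of_isClosed ⟨1, one_pos, measure_ne_top _ _⟩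
      isClosed_singleton).mono_left nhdsWithin_le_nhds
  refine ge_of_tendsto hlim ?_
  filter_upwards [self_mem_nhdsWithin] with r (hr : 0 < r)
  rw [cthickening_singleton _ hr.le]
  exact h r hr

theorem ProbabilityMeasure.le_measure_singleton_of_tendsto {ι : Type*} {L : Filter ι} [L.NeBot]
    {νs : ι → ProbabilityMeasure X} {ν : ProbabilityMeasure X} (hν : Tendsto νs L (𝓝 ν))
    {as : ι → X} {a : X} (has : Tendsto as L (𝓝 a)) {c : ℝ≥0∞}
    (hc : ∀ᶠ i in L, c ≤ (νs i : Measure X) {as i}) :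
    c ≤ (ν : Measure X) {a} := by
  refine le_measure_singleton_of_forall_le_measure_closedBall fun ε hε => ?_
  have hball : ∀ᶠ i in L, c ≤ (νs i : Measure X) (closedBall a ε) := by
    filter_upwards [hc, has (closedBall_mem_nhds a hε)] with i hci hai
    exact hci.trans (measure_mono (Set.singleton_subset_iff.mpr hai))
  calc c ≤ L.limsup fun i => (νs i : Measure X) (closedBall a ε) :=
        le_limsup_of_frequently_le hball.frequently
    _ ≤ (ν : Measure X) (closedBall a ε) :=
        ProbabilityMeasure.limsup_measure_closed_le_of_tendsto hν isClosed_closedBall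

end AtomsOfWeakLimits

theorem ProbabilityMeasure.continuousOn_of_continuousOn_integral {T X : Type*}
    [TopologicalSpace T] [TopologicalSpace X] [CompactSpace X] [MeasurableSpace X]
    [OpensMeasurableSpace X] (ν : T → ProbabilityMeasure X) {K : Set T}
    (hcont : ∀ g : X → ℝ, Continuous g →
      ContinuousOn (fun t => ∫ y, g y ∂(ν t : Measure X)) K) :
    ContinuousOn ν K := fun t ht =>
  ProbabilityMeasure.tendsto_iff_forall_integral_tendsto.mpr fun g =>
    hcont g g.continuous t ht

theorem atom_graph_closed_general {Q X : Type*} [MetricSpace Q]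
    [MetricSpace X] [CompactSpace X] [MeasurableSpace X] [BorelSpace X]
    (μc : Q → Measure X) [∀ q, IsProbabilityMeasure (μc q)]
    (K : Set Q) (hK : IsCompact K)
    (hcont : ∀ g : X → ℝ, Continuous g →
      ContinuousOn (fun q => ∫ y, g y ∂(μc q)) K)
    (δ : ℝ≥0∞) :
    IsClosed {p : Q × X | p.1 ∈ K ∧ δ ≤ μc p.1 {p.2}} := by
  set S := {p : Q × X | p.1 ∈ K ∧ δ ≤ μc p.1 {p.2}}
  refine isClosed_of_closure_subset fun p hp => ?_
  have : (𝓝[S] p).NeBot := mem_closure_iff_nhdsWithin_neBot.mp hp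
  have hfst : Tendsto Prod.fst (𝓝[S] p) (𝓝[K] p.1) :=
    continuous_fst.continuousWithinAt.tendsto_nhdsWithin fun x hx => hx.1
  have hpK : p.1 ∈ K :=
    hK.isClosed.mem_of_tendsto (hfst.mono_right nhdsWithin_le_nhds)
      (eventually_mem_nhdsWithin.mono fun x hx => hx.1)
  have hμ := ProbabilityMeasure.continuousOn_of_continuousOn_integral
    (fun q => ⟨μc q, inferInstance⟩) hcont p.1 hpK
  exact ⟨hpK, ProbabilityMeasure.le_measure_singleton_of_tendsto (hμ.tendsto.comp hfst)
    (continuous_snd.tendsto p |>.mono_left nhdsWithin_le_nhds)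
    (eventually_mem_nhdsWithin.mono fun x hx => hx.2)⟩

theorem atom_graph_closed {Q X : Type*} [MetricSpace Q]
    [MetricSpace X] [CompactSpace X] [MeasurableSpace X] [BorelSpace X]
    (μc : Q → Measure X) [∀ q, IsProbabilityMeasure (μc q)]
    (K : Set Q) (hK : IsCompact K)
    (hcont : ∀ g : X → ℝ, Continuous g →
      ContinuousOn (fun q => ∫ y, g y ∂(μc q)) K)
    (δ : ℝ≥0∞) (hδ : 0 < δ) :
    IsClosed {p : Q × X | p.1 ∈ K ∧ δ ≤ μc p.1 {p.2}} :=
  atom_graph_closed_general μc K hK hcont δ
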